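/- arXiv:1308.3675 — 3 statements merged into one kernel-verified Lean document; each statement's English description precedes it below -/
import Mathlib

section
/- On the open region where P2 > 0, the Dulac expression ∂/∂P1[(1/P2)(ε(1−P1−P2) − φ·P1·P2)] + ∂/∂P2[(1/P2)(φ·P1·P2 − μ·P2)] equals −(ε + φ·P2)/P2, which is strictly negative; hence (by Dulac's criterion) the mean-field system has no periodic orbits in the interior of the phase triangle. -/
/-! Multiplying the vector field by the Dulac function `1 / P2` turns the second component into
`φ P1 - μ`, which does not depend on `P2`, while the first component becomes affine in `P1` with
slope `-(ε + φ P2) / P2`. The divergence is therefore this slope, negative since `ε, φ, P2 > 0`. -/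

lemma hasDerivAt_const_mul_meanField_fst (c ε φ p x : ℝ) :
    HasDerivAt (fun x : ℝ => c * (ε * (1 - x - p) - φ * x * p)) (-c * (ε + φ * p)) x := by
  have h := ((((hasDerivAt_id' x).const_sub 1).sub_const p).const_mul ε).sub
    (((hasDerivAt_id' x).const_mul φ).mul_const p)
  exact (h.const_mul c).congr_deriv (by ring)

lemma deriv_one_div_mul_sub_mul (a b : ℝ) {y : ℝ} (hy : y ≠ 0) :
    deriv (fun y : ℝ => (1 / y) * (a * y - b * y)) y = 0 := by
  have hconst : (fun y : ℝ => (1 / y) * (a * y - b * y)) =ᶠ[nhds y] fun _ => a - b := by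
    filter_upwards [eventually_ne_nhds hy] with z hz
    field_simp
  rw [hconst.deriv_eq, deriv_const]

theorem mf_dulac (ε φ μ : ℝ) (hε : 0 < ε) (hφ : 0 < φ) :
    ∀ P1 P2 : ℝ, 0 < P2 →
      deriv (fun x : ℝ => (1 / P2) * (ε * (1 - x - P2) - φ * x * P2)) P1 +
        deriv (fun y : ℝ => (1 / y) * (φ * P1 * y - μ * y)) P2
        = -(ε + φ * P2) / P2 ∧
      -(ε + φ * P2) / P2 < 0 := by
  intro P1 P2 hP2
  constructor
  · rw [(hasDerivAt_const_mul_meanField_fst (1 / P2) ε φ P2 P1).deriv,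
      deriv_one_div_mul_sub_mul (φ * P1) μ hP2.ne']
    ring
  · rw [neg_div]
    exact neg_neg_of_pos (by positivity)
end

section
/- For fixed μ > 0, the limit of 4μ(μ+ε)/(2μ+3ε) as ε → 0⁺ is 2μ, and the limit as ε → ∞ is 4μ/3. Consequently: (a) if φ ≥ 2μ then for every ε > 0 one has φ > 4μ(μ+ε)/(2μ+3ε), hence Ī₀ > 1; (b) if φ < 4μ/3 then for every ε > 0 one has φ < 4μ(μ+ε)/(2μ+3ε), hence Ī₀ < 1. -/
/-!
The threshold `T(ε) = 4μ(μ+ε)/(2μ+3ε)` splits as `4μ/3 + 4μ²/(3(2μ+3ε))`, so for `ε > 0` it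
lies strictly between its limits `4μ/3` (as `ε → ∞`) and `T(0) = 2μ`. Hence `φ ≥ 2μ` lies above
every threshold and `φ < 4μ/3` below every one, and clearing the positive denominators shows that
`Ī₀ > 1` and `Ī₀ < 1` are the inequalities `T(ε) < φ` and `φ < T(ε)` respectively.
-/

open Filter Topology

noncomputable section

def paThreshold (μ ε : ℝ) : ℝ := 4 * μ * (μ + ε) / (2 * μ + 3 * ε)

def paInvasionNumber (μ ε φ : ℝ) : ℝ := 3 * φ * (μ + ε) / (μ * (φ + 4 * μ + 4 * ε))

end

section

variable {μ ε φ : ℝ}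

theorem paThreshold_eq (h : 2 * μ + 3 * ε ≠ 0) :
    paThreshold μ ε = 4 * μ / 3 + 4 * μ ^ 2 / (3 * (2 * μ + 3 * ε)) := by
  rw [paThreshold, div_add_div _ _ three_ne_zero (mul_ne_zero three_ne_zero h),
    div_eq_div_iff h (mul_ne_zero three_ne_zero (mul_ne_zero three_ne_zero h))]
  ring

theorem paThreshold_lt_two_mul (hμ : 0 < μ) (hε : 0 < ε) : paThreshold μ ε < 2 * μ := by
  rw [paThreshold, div_lt_iff₀ (by positivity)]
  nlinarith [mul_pos hμ hε]

theorem four_mul_div_three_lt_paThreshold (hμ : 0 < μ) (hε : 0 ≤ ε) :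
    4 * μ / 3 < paThreshold μ ε := by
  rw [paThreshold_eq (by positivity)]
  linarith [show 0 < 4 * μ ^ 2 / (3 * (2 * μ + 3 * ε)) by positivity]

theorem one_lt_paInvasionNumber_iff (hμ : 0 < μ) (hε : 0 ≤ ε) (hφ : 0 ≤ φ) :
    1 < paInvasionNumber μ ε φ ↔ paThreshold μ ε < φ := by
  rw [paInvasionNumber, paThreshold, lt_div_iff₀ (by positivity), div_lt_iff₀ (by positivity)]
  constructor <;> intro h <;> linarith

theorem paInvasionNumber_lt_one_iff (hμ : 0 < μ) (hε : 0 ≤ ε) (hφ : 0 ≤ φ) :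
    paInvasionNumber μ ε φ < 1 ↔ φ < paThreshold μ ε := by
  rw [paInvasionNumber, paThreshold, div_lt_iff₀ (by positivity), lt_div_iff₀ (by positivity)]
  constructor <;> intro h <;> linarith

theorem tendsto_paThreshold_nhdsGT_zero (hμ : μ ≠ 0) :
    Tendsto (paThreshold μ) (𝓝[>] 0) (𝓝 (2 * μ)) := by
  have hcont : ContinuousAt (paThreshold μ) 0 :=
    ((continuous_const.mul (continuous_const.add continuous_id)).continuousAt.div
      (continuous_const.add (continuous_const.mul continuous_id)).continuousAt (by simpa))
  have hzero : paThreshold μ 0 = 2 * μ := by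
    rw [paThreshold]
    field_simp
    ring
  exact hzero ▸ tendsto_nhdsWithin_of_tendsto_nhds hcont.tendsto

theorem tendsto_paThreshold_atTop : Tendsto (paThreshold μ) atTop (𝓝 (4 * μ / 3)) := by
  have hsplit : (fun ε => 4 * μ / 3 + 4 * μ ^ 2 / (3 * (2 * μ + 3 * ε))) =ᶠ[atTop] paThreshold μ := by
    filter_upwards [eventually_gt_atTop (-(2 * μ) / 3)] with ε hε
    rw [paThreshold_eq (by linarith)]
  have hden : Tendsto (fun ε : ℝ => 3 * (2 * μ + 3 * ε)) atTop atTop :=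
    (tendsto_atTop_add_const_left _ _ (tendsto_id.const_mul_atTop three_pos)).const_mul_atTop
      three_pos
  simpa using (tendsto_const_nhds.add (tendsto_const_nhds.div_atTop hden)).congr' hsplit

end

open Filter Topology in
theorem pa_threshold_limits (μ φ : ℝ) (hμ : 0 < μ) (hφ : 0 < φ) :
    Tendsto (fun ε : ℝ => 4 * μ * (μ + ε) / (2 * μ + 3 * ε))
      (nhdsWithin 0 (Set.Ioi 0)) (nhds (2 * μ)) ∧
    Tendsto (fun ε : ℝ => 4 * μ * (μ + ε) / (2 * μ + 3 * ε)) atTop (nhds (4 * μ / 3)) ∧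
    (2 * μ ≤ φ → ∀ ε : ℝ, 0 < ε →
      4 * μ * (μ + ε) / (2 * μ + 3 * ε) < φ ∧
      1 < 3 * φ * (μ + ε) / (μ * (φ + 4 * μ + 4 * ε))) ∧
    (φ < 4 * μ / 3 → ∀ ε : ℝ, 0 < ε →
      φ < 4 * μ * (μ + ε) / (2 * μ + 3 * ε) ∧
      3 * φ * (μ + ε) / (μ * (φ + 4 * μ + 4 * ε)) < 1) := by
  refine ⟨tendsto_paThreshold_nhdsGT_zero hμ.ne', tendsto_paThreshold_atTop, ?_, ?_⟩
  · intro hle ε hε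
    have hbelow : paThreshold μ ε < φ := (paThreshold_lt_two_mul hμ hε).trans_le hle
    exact ⟨hbelow, (one_lt_paInvasionNumber_iff hμ hε.le hφ.le).2 hbelow⟩
  · intro hlt ε hε
    have habove : φ < paThreshold μ ε := hlt.trans (four_mul_div_three_lt_paThreshold hμ hε.le)
    exact ⟨habove, (paInvasionNumber_lt_one_iff hμ hε.le hφ.le).2 habove⟩
end

section
/- There exist parameter values with ε, μ, φ > 0 such that I₀ = φ/μ > 1 while Ī₀ = 3φ(μ+ε)/(μ(φ+4μ+4ε)) < 1; indeed, whenever 4μ/3 < φ < 4μ(μ+ε)/(2μ+3ε) both conditions hold (such φ exists when ε is sufficiently small). -/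
/-!
Clearing the (positive) denominator, `Ī₀ < 1` is equivalent to the linear condition
`φ (2μ + 3ε) < 4μ (μ + ε)` on `φ`, while `I₀ > 1` means `φ > μ`. The window
`4μ/3 < φ < 4μ(μ + ε)/(2μ + 3ε)` lies above `μ` and below the first bound, and it is
nonempty for all `μ, ε > 0` because `3(2μ + 3ε) < 9(μ + ε)`.
-/

lemma pairInvasion_lt_one_iff {ε μ φ : ℝ} (hε : 0 ≤ ε) (hμ : 0 < μ) (hφ : 0 ≤ φ) :
    3 * φ * (μ + ε) / (μ * (φ + 4 * μ + 4 * ε)) < 1 ↔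
      φ * (2 * μ + 3 * ε) < 4 * μ * (μ + ε) := by
  rw [div_lt_one (by positivity)]
  constructor <;> intro h <;> nlinarith

lemma invasion_numbers_disagree_of_mem_window {ε μ φ : ℝ} (hε : 0 ≤ ε) (hμ : 0 < μ)
    (hlow : 4 * μ / 3 < φ) (hhigh : φ < 4 * μ * (μ + ε) / (2 * μ + 3 * ε)) :
    1 < φ / μ ∧ 3 * φ * (μ + ε) / (μ * (φ + 4 * μ + 4 * ε)) < 1 := by
  have hφ : 0 ≤ φ := by linarith
  refine ⟨(one_lt_div hμ).mpr (by linarith), (pairInvasion_lt_one_iff hε hμ hφ).mpr ?_⟩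
  rwa [lt_div_iff₀ (by positivity)] at hhigh

lemma invasion_window_nonempty {ε μ : ℝ} (hε : 0 ≤ ε) (hμ : 0 < μ) :
    4 * μ / 3 < 4 * μ * (μ + ε) / (2 * μ + 3 * ε) := by
  rw [div_lt_div_iff₀ (by norm_num) (by positivity)]
  nlinarith

theorem models_disagree :
    (∃ ε μ φ : ℝ, 0 < ε ∧ 0 < μ ∧ 0 < φ ∧ 1 < φ / μ ∧
      3 * φ * (μ + ε) / (μ * (φ + 4 * μ + 4 * ε)) < 1) ∧
    (∀ ε μ φ : ℝ, 0 < ε → 0 < μ → 0 < φ →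
      4 * μ / 3 < φ → φ < 4 * μ * (μ + ε) / (2 * μ + 3 * ε) →
      1 < φ / μ ∧ 3 * φ * (μ + ε) / (μ * (φ + 4 * μ + 4 * ε)) < 1) := by
  refine ⟨?_, fun ε μ φ hε hμ _ hlow hhigh =>
    invasion_numbers_disagree_of_mem_window hε.le hμ hlow hhigh⟩
  obtain ⟨φ, hlow, hhigh⟩ := exists_between (invasion_window_nonempty zero_le_one one_pos)
  exact ⟨1, 1, φ, one_pos, one_pos, by linarith,
    invasion_numbers_disagree_of_mem_window zero_le_one one_pos hlow hhigh⟩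
end
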